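/- arXiv:1710.09113 — 2 statements merged into one kernel-verified Lean document; each statement's English description precedes it below -/
import Mathlib

section
/- Let R be a ring and 0 → Q → F → N → 0 an exact sequence of left R-modules with F finitely generated and free. If N admits a finite free presentation of length n+1 (an exact sequence F^{-(n+1)} → ⋯ → F^0 → N → 0 with all F^{-k} finitely generated free), then Q admits a finite free presentation of length n. -/
universe u

/-- `N` admits a finite free presentation of length `μ`, i.e. an exact sequence
`F^{-μ} → ⋯ → F⁰ → N → 0` with all `F^{-k}` finitely generated free `R`-modules. -/
def HasFinFreePresentation (R : Type u) [Ring R] (N : Type u) [AddCommGroup N]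
    [Module R N] (μ : ℕ) : Prop :=
  ∃ (F : ℕ → Type u) (_ : ∀ k, AddCommGroup (F k)) (_ : ∀ k, Module R (F k))
    (d : ∀ k, F (k + 1) →ₗ[R] F k) (ε : F 0 →ₗ[R] N),
    (∀ k, Module.Free R (F k)) ∧ (∀ k, Module.Finite R (F k)) ∧
      Function.Surjective ε ∧
      (0 < μ → LinearMap.range (d 0) = LinearMap.ker ε) ∧
      ∀ k, k + 1 < μ → LinearMap.range (d (k + 1)) = LinearMap.ker (d k)

open LinearMap in
private theorem hasFinFreePresentation_aux
    {R : Type u} [Ring R] {Q F N : Type u} [AddCommGroup Q] [AddCommGroup F]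
    [AddCommGroup N] [Module R Q] [Module R F] [Module R N]
    [Module.Free R F] [Module.Finite R F]
    (i : Q →ₗ[R] F) (π : F →ₗ[R] N)
    (hi : Function.Injective i) (hπ : Function.Surjective π)
    (hexact : LinearMap.range i = LinearMap.ker π)
    (n : ℕ) (G : ℕ → Type u) [instA : ∀ k, AddCommGroup (G k)]
    [instM : ∀ k, Module R (G k)]
    (d : ∀ k, G (k + 1) →ₗ[R] G k) (ε : G 0 →ₗ[R] N)
    (hfree : ∀ k, Module.Free R (G k)) (hfin : ∀ k, Module.Finite R (G k))
    (hεs : Function.Surjective ε)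
    (h0 : LinearMap.range (d 0) = LinearMap.ker ε)
    (hd : ∀ k, k + 1 < n + 1 → LinearMap.range (d (k + 1)) = LinearMap.ker (d k)) :
    HasFinFreePresentation R Q n := by
  haveI := hfree 0; haveI := hfree 1; haveI := hfree 2
  haveI := hfin 0; haveI := hfin 1; haveI := hfin 2
  -- lift `ε` along `π`
  obtain ⟨σ, hσ⟩ := Module.projective_lifting_property π ε hπ
  have hσ' : ∀ g, π (σ g) = ε g := fun g => LinearMap.congr_fun hσ g
  -- lift `π` along `ε`
  obtain ⟨t, ht⟩ := Module.projective_lifting_property ε π hεs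
  have ht' : ∀ f, ε (t f) = π f := fun f => LinearMap.congr_fun ht f
  have hεd0 : ∀ g, ε (d 0 g) = 0 := fun g => by
    have : d 0 g ∈ LinearMap.ker ε := h0 ▸ LinearMap.mem_range_self (d 0) g
    exact this
  -- the corestriction of `d 0` onto `ker ε`
  set d0K : G 1 →ₗ[R] LinearMap.ker ε :=
    LinearMap.codRestrict _ (d 0) (fun x => h0 ▸ LinearMap.mem_range_self (d 0) x) with hd0K
  have hd0Ks : Function.Surjective d0K := by
    rintro ⟨y, hy⟩
    rw [← h0] at hy
    obtain ⟨x, hx⟩ := hy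
    exact ⟨x, Subtype.ext hx⟩
  -- `w g = g - t (σ g)` lands in `ker ε`
  set wK : G 0 →ₗ[R] LinearMap.ker ε :=
    LinearMap.codRestrict _ (LinearMap.id - t ∘ₗ σ) (fun g => by
      simp [LinearMap.mem_ker, ht', hσ']) with hwK
  obtain ⟨u, hu⟩ := Module.projective_lifting_property d0K wK hd0Ks
  have hu' : ∀ g, d 0 (u g) = g - t (σ g) := fun g =>
    congrArg Subtype.val (LinearMap.congr_fun hu g)
  -- the key map `β : G 1 × F → F`
  set β : G 1 × F →ₗ[R] F :=
    LinearMap.snd R (G 1) F - σ ∘ₗ ((d 0) ∘ₗ LinearMap.fst R (G 1) F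
      + t ∘ₗ LinearMap.snd R (G 1) F) with hβ
  have hβ' : ∀ x : G 1 × F, β x = x.2 - σ (d 0 x.1 + t x.2) := fun x => rfl
  have hβmem : ∀ x, β x ∈ LinearMap.range i := fun x => by
    rw [hexact, LinearMap.mem_ker, hβ']
    simp [hσ', map_add, hεd0, ht']
  set e := LinearEquiv.ofInjective i hi with he
  set εt : G 1 × F →ₗ[R] Q :=
    (e.symm : LinearMap.range i →ₗ[R] Q) ∘ₗ LinearMap.codRestrict _ β hβmem with hεt
  have hiεt : ∀ x, i (εt x) = β x := fun x => by
    have h1 : e (e.symm ⟨β x, hβmem x⟩) = ⟨β x, hβmem x⟩ := e.apply_symm_apply _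
    have h2 : (↑(e (e.symm ⟨β x, hβmem x⟩)) : F) = β x := congrArg Subtype.val h1
    rwa [LinearEquiv.ofInjective_apply] at h2
  -- the two low-degree differentials of the new presentation
  set D0 : G 2 × G 0 →ₗ[R] G 1 × F :=
    LinearMap.prod ((d 1) ∘ₗ LinearMap.fst R (G 2) (G 0) + u ∘ₗ LinearMap.snd R (G 2) (G 0))
      (σ ∘ₗ LinearMap.snd R (G 2) (G 0)) with hD0
  have hD0' : ∀ x : G 2 × G 0, D0 x = (d 1 x.1 + u x.2, σ x.2) := fun x => rfl
  set D1 : G 3 →ₗ[R] G 2 × G 0 := LinearMap.prod (d 2) 0 with hD1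
  refine ⟨fun k => match k with | 0 => G 1 × F | 1 => G 2 × G 0 | (m+2) => G (m+3),
    fun k => match k with | 0 => inferInstance | 1 => inferInstance | (m+2) => inferInstance,
    fun k => match k with | 0 => inferInstance | 1 => inferInstance | (m+2) => inferInstance,
    fun k => match k with | 0 => D0 | 1 => D1 | (m+2) => d (m+3),
    εt, fun k => ?_, fun k => ?_, ?_, ?_, fun k hkn => ?_⟩
  · rcases k with _ | _ | m
    · exact inferInstance
    · exact inferInstance
    · haveI := hfree (m+3); exact inferInstance
  · rcases k with _ | _ | m
    · exact inferInstance
    · exact inferInstance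
    · haveI := hfin (m+3); exact inferInstance
  · -- surjectivity of εt
    intro q
    have hiq : i q ∈ LinearMap.ker π := hexact ▸ LinearMap.mem_range_self i q
    have hiq' : π (i q) = 0 := hiq
    have htq : t (i q) ∈ LinearMap.ker ε := by
      simp [LinearMap.mem_ker, ht', hiq']
    rw [← h0] at htq
    obtain ⟨g1, hg1⟩ := htq
    refine ⟨(-g1, i q), hi ?_⟩
    rw [hiεt, hβ']
    simp [hg1]
  · -- range D0 = ker εt
    intro hn
    apply le_antisymm
    · rintro x ⟨⟨g2, g0⟩, rfl⟩
      have hdd : d 0 (d 1 g2) = 0 := by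
        have : d 1 g2 ∈ LinearMap.ker (d 0) := (hd 0 (by omega)) ▸ LinearMap.mem_range_self _ g2
        exact this
      have harg : d 0 (d 1 g2 + u g0) + t (σ g0) = g0 := by
        rw [map_add, hdd, hu']
        abel
      have : i (εt (D0 (g2, g0))) = 0 := by
        rw [hiεt, hβ']
        rw [hD0']
        dsimp only
        rw [harg, sub_self]
      rw [LinearMap.mem_ker]
      apply hi
      simpa using this
    · rintro ⟨g1, f⟩ hx
      have hβ0 : β (g1, f) = 0 := by
        rw [LinearMap.mem_ker] at hx
        rw [← hiεt, hx, map_zero]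
      rw [hβ'] at hβ0
      have hf : f = σ (d 0 g1 + t f) := by
        have := sub_eq_zero.mp hβ0
        simpa using this
      set g0 := d 0 g1 + t f with hg0
      have hker : g1 - u g0 ∈ LinearMap.ker (d 0) := by
        rw [LinearMap.mem_ker, map_sub, hu', ← hf, hg0]
        abel
      rw [← hd 0 (by omega)] at hker
      obtain ⟨g2, hg2⟩ := hker
      have hg2' : d 1 g2 = g1 - u g0 := hg2
      refine ⟨(g2, g0), ?_⟩
      rw [hD0']
      refine Prod.ext ?_ ?_
      · show d 1 g2 + u g0 = g1
        rw [hg2']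
        abel
      · exact hf.symm
  · -- exactness further along
    rcases k with _ | _ | m
    · -- range D1 = ker D0
      apply le_antisymm
      · rintro x ⟨g3, rfl⟩
        have hdd : d 1 (d 2 g3) = 0 := by
          have : d 2 g3 ∈ LinearMap.ker (d 1) := (hd 1 (by omega)) ▸ LinearMap.mem_range_self _ g3
          exact this
        rw [LinearMap.mem_ker]
        have : D1 g3 = (d 2 g3, 0) := rfl
        rw [this, hD0']
        simp [hdd]
      · rintro ⟨g2, g0⟩ hx
        rw [LinearMap.mem_ker] at hx
        rw [hD0'] at hx
        have h1 : d 1 g2 + u g0 = 0 := congrArg Prod.fst hx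
        have h2 : σ g0 = 0 := congrArg Prod.snd hx
        have hdd : d 0 (d 1 g2) = 0 := by
          have : d 1 g2 ∈ LinearMap.ker (d 0) := (hd 0 (by omega)) ▸ LinearMap.mem_range_self _ g2
          exact this
        have hg0 : g0 = 0 := by
          have := congrArg (d 0) h1
          rw [map_add, hdd, hu', h2, map_zero, sub_zero, zero_add] at this
          simpa using this
        have hg2 : d 1 g2 = 0 := by
          rw [hg0, map_zero, add_zero] at h1
          exact h1
        have : g2 ∈ LinearMap.range (d 2) := by
          rw [hd 1 (by omega)]
          exact hg2
        obtain ⟨g3, hg3⟩ := this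
        refine ⟨g3, ?_⟩
        have : D1 g3 = (d 2 g3, 0) := rfl
        rw [this, hg3, hg0]
    · -- range (d 3) = ker D1
      have h := hd 2 (by omega)
      apply le_antisymm
      · rintro x ⟨g4, rfl⟩
        have : d 3 g4 ∈ LinearMap.ker (d 2) := h ▸ LinearMap.mem_range_self _ g4
        rw [LinearMap.mem_ker] at this ⊢
        have hD : D1 (d 3 g4) = (d 2 (d 3 g4), 0) := rfl
        rw [hD, this]
        rfl
      · intro g3 hg3
        rw [LinearMap.mem_ker] at hg3
        have h2 : d 2 g3 = 0 := congrArg Prod.fst hg3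
        rw [← LinearMap.mem_ker, ← h] at h2
        exact h2
    · exact hd (m + 3) (by omega)

/-- Let `0 → Q → F → N → 0` be exact with `F` finitely generated free. If `N` has a
finite free presentation of length `n + 1`, then `Q` has one of length `n`. -/
theorem hasFinFreePresentation_of_ses
    {R : Type u} [Ring R] {Q F N : Type u} [AddCommGroup Q] [AddCommGroup F]
    [AddCommGroup N] [Module R Q] [Module R F] [Module R N]
    [Module.Free R F] [Module.Finite R F]
    (i : Q →ₗ[R] F) (π : F →ₗ[R] N)
    (hi : Function.Injective i) (hπ : Function.Surjective π)
    (hexact : LinearMap.range i = LinearMap.ker π)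
    (n : ℕ) (hN : HasFinFreePresentation R N (n + 1)) :
    HasFinFreePresentation R Q n := by
  obtain ⟨G, hag, hmg, d, ε, hfree, hfin, hs, h0, hk⟩ := hN
  exact hasFinFreePresentation_aux (instA := hag) (instM := hmg) i π hi hπ hexact n G d ε
    hfree hfin hs (h0 n.succ_pos) hk
end

section
/- Let p be a prime and n a positive integer with p - 1 > n. Then the group GL_n(ℤ_p) of invertible n×n matrices over the p-adic integers contains no element of order p. -/
open Polynomial

lemma padic_cyclotomic_comp_monic (p : ℕ) [Fact p.Prime] :
    ((cyclotomic p ℤ_[p]).comp (X + 1)).Monic := by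
  have : (X + 1 : ℤ_[p][X]) = X + C 1 := by simp
  rw [this]
  exact (cyclotomic.monic p ℤ_[p]).comp_X_add_C 1

lemma padic_cyclotomic_comp_natDegree (p : ℕ) [hp : Fact p.Prime] :
    ((cyclotomic p ℤ_[p]).comp (X + 1)).natDegree = p - 1 := by
  have : (X + 1 : ℤ_[p][X]) = X + C 1 := by simp
  rw [this, natDegree_comp, natDegree_cyclotomic, natDegree_X_add_C, mul_one,
    Nat.totient_prime hp.out]

lemma padic_cyclotomic_comp_irreducible (p : ℕ) [hp : Fact p.Prime] :
    Irreducible ((cyclotomic p ℚ_[p]).comp (X + 1)) := by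
  set g : ℤ_[p][X] := (cyclotomic p ℤ_[p]).comp (X + 1) with hg
  have hpu : ¬ IsUnit (p : ℤ_[p]) := (PadicInt.prime_p).not_unit
  have hp0 : (p : ℤ_[p]) ≠ 0 := (PadicInt.prime_p).ne_zero
  have hgmap : g = ((cyclotomic p ℤ).comp (X + 1)).map (Int.castRingHom ℤ_[p]) := by
    rw [map_comp, map_cyclotomic, Polynomial.map_add, Polynomial.map_one, map_X]
  have hE : g.IsEisensteinAt (Ideal.span {(p : ℤ_[p])}) := by
    have h0 := cyclotomic_comp_X_add_one_isEisensteinAt p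
    have hdegZ : ((cyclotomic p ℤ).comp (X + 1)).natDegree = p - 1 := by
      have : (X + 1 : ℤ[X]) = X + C 1 := by simp
      rw [this, natDegree_comp, natDegree_cyclotomic, natDegree_X_add_C, mul_one,
        Nat.totient_prime hp.out]
    constructor
    · rw [(padic_cyclotomic_comp_monic p).leadingCoeff]
      intro hmem
      exact hpu (isUnit_of_dvd_one (Ideal.mem_span_singleton.mp hmem))
    · intro i hi
      rw [hgmap, coeff_map]
      rw [padic_cyclotomic_comp_natDegree p, ← hdegZ] at hi
      have := h0.mem hi
      rw [Ideal.mem_span_singleton]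
      exact map_dvd (Int.castRingHom ℤ_[p]) (Ideal.mem_span_singleton.mp this)
    · have hc0 : g.coeff 0 = (p : ℤ_[p]) := by
        rw [hg, coeff_zero_eq_eval_zero, eval_comp]
        simp [eval_one_cyclotomic_prime]
      rw [hc0, Ideal.span_singleton_pow, Ideal.mem_span_singleton]
      intro hdvd
      have : (p : ℤ_[p]) * p ∣ p * 1 := by rwa [mul_one, ← sq]
      exact hpu (isUnit_of_dvd_one ((mul_dvd_mul_iff_left hp0).mp this))
  have hprime : (Ideal.span {(p : ℤ_[p])}).IsPrime := by
    rw [← PadicInt.maximalIdeal_eq_span_p]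
    exact (IsLocalRing.maximalIdeal.isMaximal ℤ_[p]).isPrime
  have hdeg : 0 < g.natDegree := by
    rw [padic_cyclotomic_comp_natDegree p]
    have := hp.out.two_le; omega
  have hgirr : Irreducible g :=
    hE.irreducible hprime (padic_cyclotomic_comp_monic p).isPrimitive hdeg
  have := ((padic_cyclotomic_comp_monic p).irreducible_iff_irreducible_map_fraction_map
    (K := ℚ_[p])).mp hgirr
  rwa [map_comp, map_cyclotomic, Polynomial.map_add, Polynomial.map_one, map_X] at this

/-- If `p` is a prime and `0 < n < p - 1`, then `GL_n(ℤ_p)` contains no element of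
order `p`: any `A` with `A ^ p = 1` is the identity. -/
theorem no_element_of_order_p_in_GL (p : ℕ) [Fact p.Prime] (n : ℕ) (hn : 0 < n)
    (h : n < p - 1) :
    ∀ A : Matrix.GeneralLinearGroup (Fin n) ℤ_[p], A ^ p = 1 → A = 1 := by
  intro A hA
  haveI : Nonempty (Fin n) := ⟨⟨0, hn⟩⟩
  set M : Matrix (Fin n) (Fin n) ℤ_[p] := (A : Matrix (Fin n) (Fin n) ℤ_[p]) with hMdef
  have hM : M ^ p = 1 := by
    have := congrArg (Units.val) hA
    simpa [hMdef] using this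
  set ψ : Matrix (Fin n) (Fin n) ℤ_[p] →+* Matrix (Fin n) (Fin n) ℚ_[p] := (algebraMap ℤ_[p] ℚ_[p]).mapMatrix with hψ
  set B : Matrix (Fin n) (Fin n) ℚ_[p] := ψ M with hB
  have hBp : B ^ p = 1 := by rw [hB, ← map_pow, hM, map_one]
  set N : Matrix (Fin n) (Fin n) ℚ_[p] := B - 1 with hN
  set f : ℚ_[p][X] := (cyclotomic p ℚ_[p]).comp (X + 1) with hf
  have hfirr := padic_cyclotomic_comp_irreducible p
  have hfdeg : f.natDegree = p - 1 := by
    have : (X + 1 : ℚ_[p][X]) = X + C 1 := by simp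
    rw [hf, this, natDegree_comp, natDegree_cyclotomic, natDegree_X_add_C, mul_one,
      Nat.totient_prime (Fact.out : p.Prime)]
  have hkey : f * X = (X + 1) ^ p - 1 := by
    have h1 := cyclotomic_prime_mul_X_sub_one ℚ_[p] p
    calc f * X = ((cyclotomic p ℚ_[p]) * (X - 1)).comp (X + 1) := by
          rw [mul_comp, sub_comp, X_comp, one_comp]; ring
      _ = ((X : ℚ_[p][X]) ^ p - 1).comp (X + 1) := by rw [h1]
      _ = (X + 1) ^ p - 1 := by rw [sub_comp, pow_comp, X_comp, one_comp]
  have haev : (aeval N) (f * X) = 0 := by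
    rw [hkey]
    have : (aeval N) ((X + 1 : ℚ_[p][X]) ^ p - 1) = (N + 1) ^ p - 1 := by
      simp [map_sub, map_pow, map_add]
    rw [this, hN, sub_add_cancel, hBp, sub_self]
  set m := minpoly ℚ_[p] N with hm
  have hdvd : m ∣ f * X := minpoly.dvd _ _ haev
  have hfX0 : f * X ≠ 0 := mul_ne_zero hfirr.ne_zero X_ne_zero
  have hm0 : m ≠ 0 := by rintro h0; rw [h0] at hdvd; exact hfX0 (zero_dvd_iff.mp hdvd)
  have hmdeg : m.natDegree ≤ n := by
    have hchar : m ∣ N.charpoly := minpoly.dvd _ _ (Matrix.aeval_self_charpoly N)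
    have := natDegree_le_of_dvd hchar (Matrix.charpoly_monic N).ne_zero
    rwa [Matrix.charpoly_natDegree_eq_dim, Fintype.card_fin] at this
  have hnotdvd : ¬ f ∣ m := by
    intro hd
    have := natDegree_le_of_dvd hd hm0
    rw [hfdeg] at this
    omega
  have hcop : IsCoprime f m := hfirr.coprime_iff_not_dvd.mpr hnotdvd
  have hdvdX : m ∣ X := hcop.symm.dvd_of_dvd_mul_left hdvd
  have hNzero : N = 0 := by
    obtain ⟨c, hc⟩ := hdvdX
    have : (aeval N) (X : ℚ_[p][X]) = 0 := by
      rw [hc, map_mul, minpoly.aeval, zero_mul]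
    simpa using this
  have hBone : B = 1 := by rwa [hN, sub_eq_zero] at hNzero
  have hMone : M = 1 := by
    apply Matrix.ext
    intro i j
    have : (algebraMap ℤ_[p] ℚ_[p]) (M i j) = (algebraMap ℤ_[p] ℚ_[p]) ((1 : Matrix (Fin n) (Fin n) ℤ_[p]) i j) := by
      have h1 := congrFun (congrFun hBone i) j
      rw [hB, hψ] at h1
      simp only [RingHom.mapMatrix_apply, Matrix.map_apply] at h1
      rw [h1]
      by_cases hij : i = j <;> simp [Matrix.one_apply, hij]
    exact (IsFractionRing.injective ℤ_[p] ℚ_[p]) this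
  exact Units.ext hMone
end
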